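/- arXiv:0902.4064 — 4 statements merged into one kernel-verified Lean document; each statement's English description precedes it below -/
import Mathlib

section
/- For complex numbers z_0, ..., z_{n-1} with all arguments z_k + j (0 ≤ j, k ≤ n-1) avoiding the nonpositive integers, the determinant det(Γ(z_k + j))_{j,k=0,...,n-1} equals ∏_{k=0}^{n-1} Γ(z_k) · ∏_{0 ≤ j < k < n} (z_k - z_j). -/
/-!
Since `Γ(z + j) = Γ(z) · z(z+1)⋯(z+j-1)`, the matrix factors as the matrix of the monic
polynomials `(X)_j` evaluated at the `z_k`, times `diag(Γ(z_k))`; the former has the Vandermonde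
determinant.
-/

open Finset

theorem Finset.prod_filter_fst_lt_snd {ι M : Type*} [Fintype ι] [LinearOrder ι]
    [LocallyFiniteOrderTop ι] [CommMonoid M] (f : ι × ι → M) :
    ∏ q ∈ univ.filter (fun q : ι × ι => q.1 < q.2), f q = ∏ i, ∏ j ∈ Ioi i, f (i, j) := by
  rw [prod_filter, ← univ_product_univ, prod_product]
  refine prod_congr rfl fun i _ => ?_
  rw [← prod_filter]
  congr 1
  ext j
  simp

theorem Complex.Gamma_add_nat_eq_mul_ascPochhammer {z : ℂ} (hz : ∀ m : ℕ, z ≠ -m) (n : ℕ) :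
    Gamma (z + n) = Gamma z * (ascPochhammer ℂ n).eval z := by
  rw [← Gamma_add_nat_div_Gamma_eq z hz, mul_div_cancel₀ _ (Gamma_ne_zero hz)]

theorem Matrix.det_of_ascPochhammer_eval {R : Type*} [CommRing R] [IsDomain R] {n : ℕ}
    (v : Fin n → R) :
    (of fun i j : Fin n => (ascPochhammer R i).eval (v j)).det =
      ∏ i, ∏ j ∈ Ioi i, (v j - v i) := by
  rw [← det_transpose, ← det_vandermonde,
    det_eval_matrixOfPolynomials_eq_det_vandermonde v _ (fun i => ascPochhammer_natDegree R i)
      (fun i => monic_ascPochhammer R i)]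
  rfl

/-- The Gamma-function determinant evaluation
`det(Γ(z_k + j)) = ∏_k Γ(z_k) · ∏_{j<k} (z_k - z_j)`. -/
theorem stmt1 (n : ℕ) (z : Fin n → ℂ)
    (hz : ∀ (k : Fin n) (j : Fin n) (m : ℕ), z k + (j : ℕ) ≠ -(m : ℂ)) :
    Matrix.det (Matrix.of fun j k : Fin n => Complex.Gamma (z k + (j : ℕ))) =
      (∏ k, Complex.Gamma (z k)) *
        ∏ q ∈ Finset.univ.filter (fun q : Fin n × Fin n => q.1 < q.2), (z q.2 - z q.1) := by
  have hz₀ (k : Fin n) (m : ℕ) : z k ≠ -m := by simpa using hz k ⟨0, k.pos⟩ m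
  have hfactor : (Matrix.of fun j k : Fin n => Complex.Gamma (z k + (j : ℕ))) =
      (Matrix.of fun j k : Fin n => (ascPochhammer ℂ j).eval (z k)) *
        Matrix.diagonal (fun k => Complex.Gamma (z k)) := by
    ext j k
    simp [Complex.Gamma_add_nat_eq_mul_ascPochhammer (hz₀ k), mul_comm]
  rw [hfactor, Matrix.det_mul, Matrix.det_diagonal, Matrix.det_of_ascPochhammer_eval,
    Finset.prod_filter_fst_lt_snd, mul_comm]
end

section
/- Suppose for each n the polynomials Θ_n, Ω_n (arising from the Laguerre–Magnus differential system W p_n' = (Ω_n - V) p_n - a_n Θ_n p_{n-1}) satisfy the two recurrences W + a_{n+1}² Θ_{n+1} - a_n² Θ_{n-1} = (x - b_n)(Ω_{n+1} - Ω_n) and (x - b_n) Θ_n = Ω_{n+1} + Ω_n, and Ω_0 = V. Then for every n, Ω_n² - a_n² Θ_n Θ_{n-1} = V² + W ∑_{i=0}^{n-1} Θ_i (as an identity of polynomials). -/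
open Polynomial Finset

/- Multiplying the first recurrence by `Θ_n` and substituting the second turns
`(x - b_n) Θ_n (Ω_{n+1} - Ω_n)` into `Ω_{n+1}² - Ω_n²`, so the quantity
`Ω_n² - a_n² Θ_n Θ_{n-1}` grows by exactly `W Θ_n` from `n` to `n + 1`; summing these
increments from `Ω_0² = V²` gives the identity. -/

theorem sq_sub_mul_mul_succ_sub_eq_mul {R : Type*} [CommRing R]
    {W x A₀ A₁ θₘ θ₀ θ₁ ω₀ ω₁ : R}
    (h₁ : W + A₁ * θ₁ - A₀ * θₘ = x * (ω₁ - ω₀)) (h₂ : x * θ₀ = ω₁ + ω₀) :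
    (ω₁ ^ 2 - A₁ * θ₁ * θ₀) - (ω₀ ^ 2 - A₀ * θ₀ * θₘ) = W * θ₀ := by
  linear_combination -θ₀ * h₁ - (ω₁ - ω₀) * h₂

/-- Telescoping identity `Ω_n² - a_n² Θ_n Θ_{n-1} = V² + W ∑_{i=0}^{n-1} Θ_i`
following from the Laguerre–Magnus recurrences for `Θ_n`, `Ω_n`. -/
theorem stmt6 (W V : Polynomial ℝ) (Θ Ω : ℤ → Polynomial ℝ) (a b : ℤ → ℝ)
    (ha0 : a 0 = 0) (hΩ0 : Ω 0 = V)
    (hrec1 : ∀ n : ℤ, 0 ≤ n →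
      W + C ((a (n + 1)) ^ 2) * Θ (n + 1) - C ((a n) ^ 2) * Θ (n - 1) =
        (X - C (b n)) * (Ω (n + 1) - Ω n))
    (hrec2 : ∀ n : ℤ, 0 ≤ n →
      (X - C (b n)) * Θ n = Ω (n + 1) + Ω n)
    (n : ℕ) :
    (Ω n) ^ 2 - C ((a n) ^ 2) * Θ n * Θ ((n : ℤ) - 1) =
      V ^ 2 + W * ∑ i ∈ Finset.range n, Θ (i : ℤ) := by
  set F : ℕ → ℝ[X] := fun n ↦ Ω n ^ 2 - C (a n ^ 2) * Θ n * Θ ((n : ℤ) - 1)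
  have hF0 : F 0 = V ^ 2 := by simp [F, ha0, hΩ0]
  have hFsucc (i : ℕ) : F (i + 1) - F i = W * Θ i := by
    have h := sq_sub_mul_mul_succ_sub_eq_mul (hrec1 i i.cast_nonneg) (hrec2 i i.cast_nonneg)
    simpa [F] using h
  calc F n = F 0 + ∑ i ∈ range n, (F (i + 1) - F i) := by rw [sum_range_sub]; abel
    _ = V ^ 2 + W * ∑ i ∈ range n, Θ i := by simp only [hF0, hFsucc, mul_sum]
end

section
/- Let θ_n(s), κ_n(s) be differentiable functions satisfying the coupled system t θ_n' = 2κ_n + (2n + α + 1 + μ + t + θ_n)θ_n and t κ_n' = (1/(θ_n + t) + 1/θ_n)κ_n² + (2n + α + μ + 1 - (2n + α + μ)t/(θ_n + t))κ_n - (n² + (n + μ/2)(α + μ))t - μ²t²/(4θ_n) + (n + μ/2)(n + α + μ/2)t²/(θ_n + t), on an interval where θ_n and θ_n + t are nonzero. Then q := (θ_n + t)/θ_n satisfies the fifth Painlevé equation q'' = (1/(2q) + 1/(q-1))(q')² - q'/t + ((q-1)²/t²)(α₁ q + α₂/q) + α₃ q/t + α₄ q(q+1)/(q-1) with α₁ =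 μ²/2, α₂ = -α²/2, α₃ = -(2n + α + 1 + μ), α₄ = -1/2. -/
/-!
Write `c = 2n + α + 1 + μ`. Since `q = 1 + t/θ`, we get `q' = (θ - tθ')/θ²`, and the first equation of
the system turns this into `q' = (θ - 2κ - (c + t + θ)θ)/θ²`, an expression in `θ` and `κ` alone.
Differentiating it once more and eliminating `θ'` and `κ'` with the two equations of the system
expresses `q''` as a rational function of `t, θ, κ`, which agrees with the Painlevé V right-hand side
evaluated at `q, q'`.
-/

open Filter Topology

noncomputable def painleveVRhs (α₁ α₂ α₃ α₄ t q q' : ℝ) : ℝ :=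
  (1 / (2 * q) + 1 / (q - 1)) * q' ^ 2 - q' / t
    + ((q - 1) ^ 2 / t ^ 2) * (α₁ * q + α₂ / q) + α₃ * q / t + α₄ * q * (q + 1) / (q - 1)

section

variable {θ κ : ℝ → ℝ} {c t θ' κ' : ℝ}

lemma hasDerivAt_add_self_div (hθ : HasDerivAt θ θ' t) (h0 : θ t ≠ 0) :
    HasDerivAt (fun s => (θ s + s) / θ s) ((θ t - t * θ') / θ t ^ 2) t := by
  refine ((hθ.add (hasDerivAt_id t)).div hθ h0).congr_deriv ?_
  simp only [Pi.add_apply, id_eq]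
  ring

lemma hasDerivAt_reduced_qDeriv (hθ : HasDerivAt θ θ' t) (hκ : HasDerivAt κ κ' t)
    (h0 : θ t ≠ 0) :
    HasDerivAt (fun s => (θ s - (2 * κ s + (c + s + θ s) * θ s)) / θ s ^ 2)
      (((θ' - (2 * κ' + (1 + θ') * θ t + (c + t + θ t) * θ')) * θ t
        - 2 * (θ t - (2 * κ t + (c + t + θ t) * θ t)) * θ') / θ t ^ 3) t := by
  have hN := hθ.sub ((hκ.const_mul 2).add
    ((((hasDerivAt_const t c).add (hasDerivAt_id t)).add hθ).mul hθ))
  refine (hN.div (hθ.pow 2) (pow_ne_zero 2 h0)).congr_deriv ?_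
  simp only [Pi.add_apply, Pi.mul_apply, Pi.sub_apply, Pi.pow_apply, id_eq]
  field_simp
  ring

end

lemma painleveV_of_coupled_system (n α μ t θ κ θ' κ' : ℝ) (ht : t ≠ 0) (hθ : θ ≠ 0)
    (hθt : θ + t ≠ 0)
    (h₁ : t * θ' = 2 * κ + (2 * n + α + 1 + μ + t + θ) * θ)
    (h₂ : t * κ' = (1 / (θ + t) + 1 / θ) * κ ^ 2
        + (2 * n + α + μ + 1 - (2 * n + α + μ) * t / (θ + t)) * κ
        - (n ^ 2 + (n + μ / 2) * (α + μ)) * t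
        - μ ^ 2 * t ^ 2 / (4 * θ)
        + (n + μ / 2) * (n + α + μ / 2) * t ^ 2 / (θ + t)) :
    ((θ' - (2 * κ' + (1 + θ') * θ + (2 * n + α + 1 + μ + t + θ) * θ')) * θ
        - 2 * (θ - (2 * κ + (2 * n + α + 1 + μ + t + θ) * θ)) * θ') / θ ^ 3
      = painleveVRhs (μ ^ 2 / 2) (-(α ^ 2) / 2) (-(2 * n + α + 1 + μ)) (-(1 / 2)) t
          ((θ + t) / θ) ((θ - (2 * κ + (2 * n + α + 1 + μ + t + θ) * θ)) / θ ^ 2) := by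
  have hθ' : θ' = (2 * κ + (2 * n + α + 1 + μ + t + θ) * θ) / t := by
    rw [eq_div_iff ht]; linear_combination h₁
  have hκ' : κ' = ((1 / (θ + t) + 1 / θ) * κ ^ 2
        + (2 * n + α + μ + 1 - (2 * n + α + μ) * t / (θ + t)) * κ
        - (n ^ 2 + (n + μ / 2) * (α + μ)) * t
        - μ ^ 2 * t ^ 2 / (4 * θ)
        + (n + μ / 2) * (n + α + μ / 2) * t ^ 2 / (θ + t)) / t := by
    rw [eq_div_iff ht]; linear_combination h₂
  have hq1 : (θ + t) / θ - 1 ≠ 0 := by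
    rw [div_sub_one hθ, add_sub_cancel_left]; exact div_ne_zero ht hθ
  have hq0 : (θ + t) / θ ≠ 0 := div_ne_zero hθt hθ
  unfold painleveVRhs
  rw [hθ', hκ']
  field_simp [ht, hθ, hθt, hq0, hq1]
  ring

theorem stmt10_general (n : ℕ) (α μ : ℝ) (S : Set ℝ) (hS : IsOpen S)
    (hSpos : ∀ t ∈ S, 0 < t)
    (θ κ : ℝ → ℝ)
    (hθd : ∀ t ∈ S, DifferentiableAt ℝ θ t)
    (hκd : ∀ t ∈ S, DifferentiableAt ℝ κ t)
    (hθ0 : ∀ t ∈ S, θ t ≠ 0) (hθt : ∀ t ∈ S, θ t + t ≠ 0)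
    (q : ℝ → ℝ) (hq : q = fun t => (θ t + t) / θ t)
    (heq1 : ∀ t ∈ S, t * deriv θ t =
      2 * κ t + (2 * (n : ℝ) + α + 1 + μ + t + θ t) * θ t)
    (heq2 : ∀ t ∈ S, t * deriv κ t =
      (1 / (θ t + t) + 1 / θ t) * κ t ^ 2
        + (2 * (n : ℝ) + α + μ + 1 - (2 * (n : ℝ) + α + μ) * t / (θ t + t)) * κ t
        - ((n : ℝ) ^ 2 + ((n : ℝ) + μ / 2) * (α + μ)) * t
        - μ ^ 2 * t ^ 2 / (4 * θ t)
        + ((n : ℝ) + μ / 2) * ((n : ℝ) + α + μ / 2) * t ^ 2 / (θ t + t)) :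
    ∀ t ∈ S,
      deriv (deriv q) t =
        (1 / (2 * q t) + 1 / (q t - 1)) * (deriv q t) ^ 2 - deriv q t / t
          + ((q t - 1) ^ 2 / t ^ 2) * ((μ ^ 2 / 2) * q t + (-(α ^ 2) / 2) / q t)
          + (-(2 * (n : ℝ) + α + 1 + μ)) * q t / t
          + (-(1 / 2 : ℝ)) * q t * (q t + 1) / (q t - 1) := by
  have hq' : ∀ s ∈ S, deriv q s =
      (θ s - (2 * κ s + (2 * (n : ℝ) + α + 1 + μ + s + θ s) * θ s)) / θ s ^ 2 := by
    intro s hs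
    rw [hq, (hasDerivAt_add_self_div (hθd s hs).hasDerivAt (hθ0 s hs)).deriv, heq1 s hs]
  intro t ht
  have hq'_eventually : deriv q =ᶠ[𝓝 t]
      fun s => (θ s - (2 * κ s + (2 * (n : ℝ) + α + 1 + μ + s + θ s) * θ s)) / θ s ^ 2 :=
    eventually_of_mem (hS.mem_nhds ht) hq'
  rw [hq'_eventually.deriv_eq, (hasDerivAt_reduced_qDeriv (hθd t ht).hasDerivAt
      (hκd t ht).hasDerivAt (hθ0 t ht)).deriv, hq' t ht, hq]
  exact painleveV_of_coupled_system n α μ t (θ t) (κ t) _ _ (hSpos t ht).ne' (hθ0 t ht)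
    (hθt t ht) (heq1 t ht) (heq2 t ht)

/-- If `θ_n, κ_n` satisfy the coupled system of Corollary `cor2:tderivatives`, then
`q = (θ_n + t)/θ_n` satisfies the fifth Painlevé equation with parameters
`α₁ = μ²/2, α₂ = -α²/2, α₃ = -(2n+α+1+μ), α₄ = -1/2`. -/
theorem stmt10 (n : ℕ) (α μ : ℝ) (S : Set ℝ) (hS : IsOpen S)
    (hSpos : ∀ t ∈ S, 0 < t)
    (θ κ : ℝ → ℝ)
    (hθd : ∀ t ∈ S, DifferentiableAt ℝ θ t)
    (hκd : ∀ t ∈ S, DifferentiableAt ℝ κ t)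
    (hθ0 : ∀ t ∈ S, θ t ≠ 0) (hθt : ∀ t ∈ S, θ t + t ≠ 0)
    (q : ℝ → ℝ) (hq : q = fun t => (θ t + t) / θ t)
    (hq0 : ∀ t ∈ S, q t ≠ 0) (hq1 : ∀ t ∈ S, q t ≠ 1)
    (heq1 : ∀ t ∈ S, t * deriv θ t =
      2 * κ t + (2 * (n : ℝ) + α + 1 + μ + t + θ t) * θ t)
    (heq2 : ∀ t ∈ S, t * deriv κ t =
      (1 / (θ t + t) + 1 / θ t) * κ t ^ 2
        + (2 * (n : ℝ) + α + μ + 1 - (2 * (n : ℝ) + α + μ) * t / (θ t + t)) * κ t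
        - ((n : ℝ) ^ 2 + ((n : ℝ) + μ / 2) * (α + μ)) * t
        - μ ^ 2 * t ^ 2 / (4 * θ t)
        + ((n : ℝ) + μ / 2) * ((n : ℝ) + α + μ / 2) * t ^ 2 / (θ t + t)) :
    ∀ t ∈ S,
      deriv (deriv q) t =
        (1 / (2 * q t) + 1 / (q t - 1)) * (deriv q t) ^ 2 - deriv q t / t
          + ((q t - 1) ^ 2 / t ^ 2) * ((μ ^ 2 / 2) * q t + (-(α ^ 2) / 2) / q t)
          + (-(2 * (n : ℝ) + α + 1 + μ)) * q t / t
          + (-(1 / 2 : ℝ)) * q t * (q t + 1) / (q t - 1) :=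
  stmt10_general n α μ S hS hSpos θ κ hθd hκd hθ0 hθt q hq heq1 heq2
end

section
/- Let H be defined by tH = q(q-1)²p² - ((v₂ - v₁)(q-1)² - 2(v₁ + v₂)q(q-1) + tq)p + (v₃ - v₁)(v₄ - v₁)(q-1) with v₁ + v₂ + v₃ + v₄ = 0. If q(t), p(t) satisfy the Hamilton equations q' = ∂H/∂p, p' = -∂H/∂q, then eliminating p shows q satisfies the fifth Painlevé equation with parameters α₁ = (v₃ - v₄)²/2, α₂ = -(v₂ - v₁)²/2, α₃ = 2v₁ + 2v₂ - 1, α₄ = -1/2. -/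
/-!
The first Hamilton equation is linear in `p`, so it determines `p` from `t, q, q'` as long as
`q ≠ 0, 1`. Differentiating it once more and inserting the second Hamilton equation expresses
`q''` through `t, q, q', p`; substituting the value of `p` leaves a rational identity in
`t, q, q'`, which is Painlevé V once `v₄ = -v₁ - v₂ - v₃`.
-/

namespace PainleveV

variable (v₁ v₂ v₃ v₄ : ℝ)

noncomputable def hamiltonian (t q p : ℝ) : ℝ :=
  (q * (q - 1) ^ 2 * p ^ 2
    - ((v₂ - v₁) * (q - 1) ^ 2 - 2 * (v₁ + v₂) * q * (q - 1) + t * q) * p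
    + (v₃ - v₁) * (v₄ - v₁) * (q - 1)) / t

noncomputable def hamiltonianDerivP (t q p : ℝ) : ℝ :=
  (2 * q * (q - 1) ^ 2 * p
    - ((v₂ - v₁) * (q - 1) ^ 2 - 2 * (v₁ + v₂) * q * (q - 1) + t * q)) / t

noncomputable def hamiltonianDerivQ (t q p : ℝ) : ℝ :=
  ((q - 1) * (3 * q - 1) * p ^ 2
    - (2 * (v₂ - v₁) * (q - 1) - 2 * (v₁ + v₂) * (2 * q - 1) + t) * p
    + (v₃ - v₁) * (v₄ - v₁)) / t

theorem hasDerivAt_hamiltonian_p (t q p : ℝ) :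
    HasDerivAt (hamiltonian v₁ v₂ v₃ v₄ t q) (hamiltonianDerivP v₁ v₂ t q p) p := by
  have h := ((((hasDerivAt_pow 2 p).const_mul (q * (q - 1) ^ 2)).sub
    ((hasDerivAt_id p).const_mul
      ((v₂ - v₁) * (q - 1) ^ 2 - 2 * (v₁ + v₂) * q * (q - 1) + t * q))).add_const
    ((v₃ - v₁) * (v₄ - v₁) * (q - 1))).div_const t
  refine h.congr_deriv ?_
  simp only [hamiltonianDerivP]
  ring

theorem hasDerivAt_hamiltonian_q (t q p : ℝ) :
    HasDerivAt (fun q ↦ hamiltonian v₁ v₂ v₃ v₄ t q p)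
      (hamiltonianDerivQ v₁ v₂ v₃ v₄ t q p) q := by
  have hq := hasDerivAt_id' q
  have hsq := (hq.sub_const 1).pow 2
  have hB := ((hsq.const_mul (v₂ - v₁)).sub
    ((hq.const_mul (2 * (v₁ + v₂))).mul (hq.sub_const 1))).add (hq.const_mul t)
  have h := ((((hq.mul hsq).mul_const (p ^ 2)).sub (hB.mul_const p)).add
    ((hq.sub_const 1).const_mul ((v₃ - v₁) * (v₄ - v₁)))).div_const t
  refine h.congr_deriv ?_
  simp only [hamiltonianDerivQ, Pi.pow_apply]
  ring

/-- With `∂H/∂p = N / t` for a polynomial `N`, the quotient rule gives `(N' - ∂H/∂p) / t`. -/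
theorem hasDerivAt_hamiltonianDerivP_comp {q p : ℝ → ℝ} {q' p' t : ℝ}
    (hq : HasDerivAt q q' t) (hp : HasDerivAt p p' t) (ht : t ≠ 0) :
    HasDerivAt (fun s ↦ hamiltonianDerivP v₁ v₂ s (q s) (p s))
      ((2 * (q t - 1) * (3 * q t - 1) * q' * p t + 2 * q t * (q t - 1) ^ 2 * p'
        - (2 * (v₂ - v₁) * (q t - 1) - 2 * (v₁ + v₂) * (2 * q t - 1) + t) * q' - q t
        - hamiltonianDerivP v₁ v₂ t (q t) (p t)) / t) t := by
  have hsq := (hq.sub_const 1).pow 2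
  have hB := ((hsq.const_mul (v₂ - v₁)).sub
    ((hq.const_mul (2 * (v₁ + v₂))).mul (hq.sub_const 1))).add ((hasDerivAt_id' t).mul hq)
  have h := ((((hq.const_mul 2).mul hsq).mul hp).sub hB).div (hasDerivAt_id' t) ht
  refine h.congr_deriv ?_
  simp only [hamiltonianDerivP, Pi.pow_apply, Pi.mul_apply, Pi.sub_apply, Pi.add_apply]
  field_simp
  ring

theorem painleveV_of_hamilton_eqs {t q p q' p' q'' : ℝ} (hv : v₁ + v₂ + v₃ + v₄ = 0)
    (ht : t ≠ 0) (hq0 : q ≠ 0) (hq1 : q ≠ 1)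
    (hq' : q' = hamiltonianDerivP v₁ v₂ t q p)
    (hp' : p' = -hamiltonianDerivQ v₁ v₂ v₃ v₄ t q p)
    (hq'' : q'' = (2 * (q - 1) * (3 * q - 1) * q' * p + 2 * q * (q - 1) ^ 2 * p'
        - (2 * (v₂ - v₁) * (q - 1) - 2 * (v₁ + v₂) * (2 * q - 1) + t) * q' - q - q') / t) :
    q'' = (1 / (2 * q) + 1 / (q - 1)) * q' ^ 2 - q' / t
      + ((q - 1) ^ 2 / t ^ 2) * (((v₃ - v₄) ^ 2 / 2) * q + (-((v₂ - v₁) ^ 2) / 2) / q)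
      + (2 * v₁ + 2 * v₂ - 1) * q / t
      + (-(1 / 2 : ℝ)) * q * (q + 1) / (q - 1) := by
  have hq1' : q - 1 ≠ 0 := sub_ne_zero.mpr hq1
  have hp : p = (t * q' + ((v₂ - v₁) * (q - 1) ^ 2 - 2 * (v₁ + v₂) * q * (q - 1) + t * q)) /
      (2 * q * (q - 1) ^ 2) := by
    rw [hq', hamiltonianDerivP]
    field_simp
    ring
  obtain rfl : v₄ = -v₁ - v₂ - v₃ := by linarith
  rw [hq'', hp', hp, hamiltonianDerivQ]
  field_simp
  ring

end PainleveV

open PainleveV in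
/-- If `(q, p)` satisfy the Hamilton equations for the Painlevé V Hamiltonian
`tH = q(q-1)²p² - ((v₂-v₁)(q-1)² - 2(v₁+v₂)q(q-1) + tq)p + (v₃-v₁)(v₄-v₁)(q-1)`,
then `q` satisfies the fifth Painlevé equation with parameters
`α₁ = (v₃-v₄)²/2, α₂ = -(v₂-v₁)²/2, α₃ = 2v₁+2v₂-1, α₄ = -1/2`. -/
theorem stmt11 (v₁ v₂ v₃ v₄ : ℝ) (hv : v₁ + v₂ + v₃ + v₄ = 0)
    (H : ℝ → ℝ → ℝ → ℝ)
    (hH : ∀ t q p, H t q p =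
      (q * (q - 1) ^ 2 * p ^ 2
        - ((v₂ - v₁) * (q - 1) ^ 2 - 2 * (v₁ + v₂) * q * (q - 1) + t * q) * p
        + (v₃ - v₁) * (v₄ - v₁) * (q - 1)) / t)
    (S : Set ℝ) (hS : IsOpen S) (ht0 : ∀ t ∈ S, t ≠ 0)
    (q p : ℝ → ℝ)
    (hqd : ∀ t ∈ S, DifferentiableAt ℝ q t)
    (hpd : ∀ t ∈ S, DifferentiableAt ℝ p t)
    (hq0 : ∀ t ∈ S, q t ≠ 0) (hq1 : ∀ t ∈ S, q t ≠ 1)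
    (hham1 : ∀ t ∈ S, deriv q t = deriv (fun p' => H t (q t) p') (p t))
    (hham2 : ∀ t ∈ S, deriv p t = - deriv (fun q' => H t q' (p t)) (q t)) :
    ∀ t ∈ S,
      deriv (deriv q) t =
        (1 / (2 * q t) + 1 / (q t - 1)) * (deriv q t) ^ 2 - deriv q t / t
          + ((q t - 1) ^ 2 / t ^ 2) *
              (((v₃ - v₄) ^ 2 / 2) * q t + (-((v₂ - v₁) ^ 2) / 2) / q t)
          + (2 * v₁ + 2 * v₂ - 1) * q t / t
          + (-(1 / 2 : ℝ)) * q t * (q t + 1) / (q t - 1) := by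
  obtain rfl : H = hamiltonian v₁ v₂ v₃ v₄ := by
    funext t q p
    exact hH t q p
  have hq' : ∀ t ∈ S, deriv q t = hamiltonianDerivP v₁ v₂ t (q t) (p t) := fun t ht ↦
    (hham1 t ht).trans (hasDerivAt_hamiltonian_p v₁ v₂ v₃ v₄ t (q t) (p t)).deriv
  intro t ht
  have hp' : deriv p t = -hamiltonianDerivQ v₁ v₂ v₃ v₄ t (q t) (p t) :=
    (hham2 t ht).trans (congrArg Neg.neg (hasDerivAt_hamiltonian_q v₁ v₂ v₃ v₄ t _ _).deriv)
  have hq'' := (hasDerivAt_hamiltonianDerivP_comp v₁ v₂ (hqd t ht).hasDerivAt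
    (hpd t ht).hasDerivAt (ht0 t ht)).congr_of_eventuallyEq
    (Filter.eventuallyEq_of_mem (hS.mem_nhds ht) hq')
  rw [← hq' t ht] at hq''
  exact painleveV_of_hamilton_eqs v₁ v₂ v₃ v₄ hv (ht0 t ht) (hq0 t ht) (hq1 t ht) (hq' t ht) hp'
    hq''.deriv
end
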